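/- arXiv:2307.09826 — 8 statements merged into one kernel-verified Lean document; each statement's English description precedes it below -/
import Mathlib

section
/- Let V be a vector space over ℂ with ℤ-indexed bilinear products aₙb, an internal direct-sum grading V = ⊕_{n∈ℤ} Vₙ with every Vₙ finite-dimensional, and distinguished vectors 𝟙 ≠ 0 and ω such that ω₁a = n·a for all a ∈ Vₙ and n ∈ ℤ. Assume V is simple: the only subspaces U ⊆ V with aₙu ∈ U for all a ∈ V, u ∈ U, n ∈ ℤ are U = 0 and U = V. Then every nonzero endomorphism φ of V is bijective, and its inverse is again an endomorphism; hence the endomorphisms of V form a division algebra over ℂ whose group of units is the group of automorphisms of V. (These hypotheses hold for any simple vertex operator algebra.) -/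
/-- An endomorphism of the ℤ-indexed product structure `μ` with distinguished
vectors `one` (vacuum) and `ω` (Virasoro element): a linear map commuting with all
products and fixing `one` and `ω`. -/
def IsEndo {V : Type*} [AddCommGroup V] [Module ℂ V]
    (μ : ℤ → V →ₗ[ℂ] V →ₗ[ℂ] V) (one ω : V) (φ : V →ₗ[ℂ] V) : Prop :=
  (∀ (n : ℤ) (a b : V), φ (μ n a b) = μ n (φ a) (φ b)) ∧ φ one = one ∧ φ ω = ω

/-- If `L w = n • w` then `w` lies in the `n`-th graded piece, since each graded piece
is contained in the corresponding eigenspace of `L` and eigenspaces are independent. -/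
theorem mem_grade_of_eigen {V : Type*} [AddCommGroup V] [Module ℂ V]
    (Vg : ℤ → Submodule ℂ V) (hInt : DirectSum.IsInternal Vg)
    (L : V →ₗ[ℂ] V) (hL : ∀ (n : ℤ) (a : V), a ∈ Vg n → L a = (n : ℂ) • a)
    (n : ℤ) (w : V) (hw : L w = (n : ℂ) • w) : w ∈ Vg n := by
  classical
  letI := hInt.chooseDecomposition
  set c : ℤ → V := fun m => ((DirectSum.decompose Vg w) m : V) with hc
  set s := (DirectSum.decompose Vg w).support with hs
  have hsum : ∑ m ∈ s, c m = w := DirectSum.sum_support_decompose Vg w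
  have hsplit : ∑ m ∈ s, c m = c n + ∑ m ∈ s.erase n, c m := by
    by_cases hn : n ∈ s
    · exact (Finset.add_sum_erase s c hn).symm
    · rw [Finset.erase_eq_of_notMem hn]
      have : (DirectSum.decompose Vg w) n = 0 := DFinsupp.notMem_support_iff.mp hn
      simp [hc, this]
  set E : ℂ → Submodule ℂ V := Module.End.eigenspace L with hE
  have hmemE : ∀ m : ℤ, ∀ x ∈ Vg m, x ∈ E (m : ℂ) := fun m x hx =>
    Module.End.mem_eigenspace_iff.mpr (hL m x hx)
  have hd : w - c n ∈ E (n : ℂ) := by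
    apply Submodule.sub_mem
    · exact Module.End.mem_eigenspace_iff.mpr hw
    · exact hmemE n _ (DirectSum.decompose Vg w n).2
  have hd' : w - c n ∈ ⨆ (x : ℂ) (_ : x ≠ (n : ℂ)), E x := by
    have : w - c n = ∑ m ∈ s.erase n, c m := by
      rw [← hsum, hsplit, add_sub_cancel_left]
    rw [this]
    apply Submodule.sum_mem
    intro m hm
    have hmn : (m : ℂ) ≠ (n : ℂ) := by
      exact_mod_cast (Finset.mem_erase.mp hm).1
    exact Submodule.mem_iSup_of_mem (m : ℂ) (Submodule.mem_iSup_of_mem hmn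
      (hmemE m _ (DirectSum.decompose Vg w m).2))
  have hdisj := (iSupIndep_def.mp (Module.End.eigenspaces_iSupIndep L)) (n : ℂ)
  have : w - c n = 0 := (Submodule.disjoint_def.mp hdisj) _ hd hd'
  have hwc : w = c n := sub_eq_zero.mp this
  rw [hwc]
  exact (DirectSum.decompose Vg w n).2

/-- Every nonzero endomorphism of a simple graded vertex-operator-type algebra is
bijective, with inverse again an endomorphism. -/
theorem stmt0 {V : Type*} [AddCommGroup V] [Module ℂ V]
    (μ : ℤ → V →ₗ[ℂ] V →ₗ[ℂ] V) (one ω : V)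
    (Vg : ℤ → Submodule ℂ V)
    (hInt : DirectSum.IsInternal Vg)
    (hFin : ∀ n : ℤ, FiniteDimensional ℂ (Vg n))
    (hone : one ≠ 0)
    (hω : ∀ (n : ℤ) (a : V), a ∈ Vg n → μ 1 ω a = (n : ℂ) • a)
    (hSimple : ∀ U : Submodule ℂ V,
        (∀ (a u : V), u ∈ U → ∀ n : ℤ, μ n a u ∈ U) → U = ⊥ ∨ U = ⊤)
    (φ : V →ₗ[ℂ] V) (hφ : IsEndo μ one ω φ) (hφ0 : φ ≠ 0) :
    Function.Bijective φ ∧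
      ∃ ψ : V →ₗ[ℂ] V, IsEndo μ one ω ψ ∧
        ψ ∘ₗ φ = LinearMap.id ∧ φ ∘ₗ ψ = LinearMap.id := by
  obtain ⟨hμ, h1, hωφ⟩ := hφ
  -- injectivity: kernel is an ideal
  have hker : ∀ (a u : V), u ∈ LinearMap.ker φ → ∀ n : ℤ, μ n a u ∈ LinearMap.ker φ := by
    intro a u hu n
    rw [LinearMap.mem_ker] at hu ⊢
    rw [hμ, hu, map_zero]
  have hinj : Function.Injective φ := by
    rcases hSimple _ hker with h | h
    · exact LinearMap.ker_eq_bot.mp h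
    · exact absurd (LinearMap.ker_eq_top.mp h) hφ0
  -- φ preserves the grading
  have hmaps : ∀ n : ℤ, ∀ v ∈ Vg n, φ v ∈ Vg n := by
    intro n v hv
    apply mem_grade_of_eigen Vg hInt (μ 1 ω) hω n
    have : μ 1 ω (φ v) = φ (μ 1 ω v) := by rw [hμ, hωφ]
    rw [this, hω n v hv, map_smul]
  -- surjectivity
  have hsurj : Function.Surjective φ := by
    rw [← LinearMap.range_eq_top]
    rw [eq_top_iff, ← hInt.submodule_iSup_eq_top]
    apply iSup_le
    intro n
    haveI := hFin n
    set f : Vg n →ₗ[ℂ] Vg n := φ.restrict (fun x hx => hmaps n x hx) with hf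
    have hfinj : Function.Injective f := by
      intro x y hxy
      apply Subtype.ext
      apply hinj
      have := congrArg (Subtype.val) hxy
      simpa [hf, LinearMap.restrict_apply] using this
    have hfsurj := LinearMap.injective_iff_surjective.mp hfinj
    intro v hv
    obtain ⟨u, hu⟩ := hfsurj ⟨v, hv⟩
    refine ⟨u, ?_⟩
    have := congrArg (Subtype.val) hu
    simpa [hf, LinearMap.restrict_apply] using this
  have hbij : Function.Bijective φ := ⟨hinj, hsurj⟩
  refine ⟨hbij, ?_⟩
  set e := LinearEquiv.ofBijective φ hbij with he
  have hps : ∀ x : V, φ (e.symm x) = x := fun x => e.apply_symm_apply x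
  refine ⟨e.symm.toLinearMap, ⟨?_, ?_, ?_⟩, ?_, ?_⟩
  · intro n a b
    apply hinj
    simp only [LinearEquiv.coe_coe]
    rw [hps, hμ, hps, hps]
  · apply hinj
    simp only [LinearEquiv.coe_coe]
    rw [hps, h1]
  · apply hinj
    simp only [LinearEquiv.coe_coe]
    rw [hps, hωφ]
  · ext x; exact e.symm_apply_apply x
  · ext x; exact e.apply_symm_apply x
end

section
/- Let V be a vector space over ℂ with ℤ-indexed bilinear products aₙb, an internal direct-sum grading V = ⊕_{n∈ℤ} Vₙ with every Vₙ finite-dimensional, and distinguished vectors 𝟙 ≠ 0 and ω such that ω₁a = n·a for all a ∈ Vₙ and n ∈ ℤ. Assume V is simple: the only subspaces U ⊆ V with aₙu ∈ U for all a ∈ V, u ∈ U, n ∈ ℤ are U = 0 and U = V. Then the map d ↦ d + Id_V is a bijection from the set of 1-derivations of V onto the set of automorphisms of V. (These hypotheses hold for any simple vertex operator algebra.) -/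
/-- An automorphism is a bijective endomorphism. -/
def IsAuto {V : Type*} [AddCommGroup V] [Module ℂ V]
    (μ : ℤ → V →ₗ[ℂ] V →ₗ[ℂ] V) (one ω : V) (φ : V →ₗ[ℂ] V) : Prop :=
  IsEndo μ one ω φ ∧ Function.Bijective φ

/-- A 1-derivation: `d 𝟙 = 0`, `d ω = 0` and
`d(aₙb) = (da)ₙb + aₙ(db) + (da)ₙ(db)`. -/
def IsOneDerivation {V : Type*} [AddCommGroup V] [Module ℂ V]
    (μ : ℤ → V →ₗ[ℂ] V →ₗ[ℂ] V) (one ω : V) (d : V →ₗ[ℂ] V) : Prop :=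
  d one = 0 ∧ d ω = 0 ∧
    ∀ (n : ℤ) (a b : V), d (μ n a b) = μ n (d a) b + μ n a (d b) + μ n (d a) (d b)

section Aux

variable {V : Type*} [AddCommGroup V] [Module ℂ V]
  (μ : ℤ → V →ₗ[ℂ] V →ₗ[ℂ] V) (one ω : V)

lemma der_iff_endo (d : V →ₗ[ℂ] V) :
    IsOneDerivation μ one ω d ↔ IsEndo μ one ω (d + LinearMap.id) := by
  have expand : ∀ (n : ℤ) (a b : V),
      μ n (d a + a) (d b + b)
        = μ n (d a) b + μ n a (d b) + μ n (d a) (d b) + μ n a b := by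
    intro n a b
    simp only [map_add, LinearMap.add_apply]
    abel
  constructor
  · rintro ⟨h1, h2, h3⟩
    refine ⟨fun n a b => ?_, ?_, ?_⟩
    · simp only [LinearMap.add_apply, LinearMap.id_coe, id_eq, expand, h3 n a b]
    · simp [h1]
    · simp [h2]
  · rintro ⟨h1, h2, h3⟩
    refine ⟨?_, ?_, fun n a b => ?_⟩
    · have := h2; simp only [LinearMap.add_apply, LinearMap.id_coe, id_eq] at this
      exact add_eq_right.mp this
    · have := h3; simp only [LinearMap.add_apply, LinearMap.id_coe, id_eq] at this
      exact add_eq_right.mp this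
    · have := h1 n a b
      simp only [LinearMap.add_apply, LinearMap.id_coe, id_eq, expand] at this
      exact add_right_cancel this

end Aux

/-- On a simple graded vertex-operator-type algebra, `d ↦ d + Id` is a bijection
from the 1-derivations onto the automorphisms. -/
theorem stmt1 {V : Type*} [AddCommGroup V] [Module ℂ V]
    (μ : ℤ → V →ₗ[ℂ] V →ₗ[ℂ] V) (one ω : V)
    (Vg : ℤ → Submodule ℂ V)
    (hInt : DirectSum.IsInternal Vg)
    (hFin : ∀ n : ℤ, FiniteDimensional ℂ (Vg n))
    (hone : one ≠ 0)
    (hω : ∀ (n : ℤ) (a : V), a ∈ Vg n → μ 1 ω a = (n : ℂ) • a)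
    (hSimple : ∀ U : Submodule ℂ V,
        (∀ (a u : V), u ∈ U → ∀ n : ℤ, μ n a u ∈ U) → U = ⊥ ∨ U = ⊤) :
    Set.BijOn (fun d : V →ₗ[ℂ] V => d + LinearMap.id)
      {d | IsOneDerivation μ one ω d} {φ | IsAuto μ one ω φ} := by
  -- Every endomorphism is bijective.
  have endo_bij : ∀ φ : V →ₗ[ℂ] V, IsEndo μ one ω φ → Function.Bijective φ := by
    intro φ hφ
    obtain ⟨hmul, h1, hom⟩ := hφ
    -- injectivity via simplicity
    have hker : LinearMap.ker φ = ⊥ := by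
      rcases hSimple (LinearMap.ker φ) (fun a u hu n => by
        rw [LinearMap.mem_ker] at hu ⊢
        rw [hmul n a u, hu, map_zero]) with h | h
      · exact h
      · exfalso
        have : φ one = 0 := by
          have : one ∈ LinearMap.ker φ := h ▸ Submodule.mem_top
          exact this
        rw [h1] at this; exact hone this
    have hinj : Function.Injective φ := LinearMap.ker_eq_bot.mp hker
    -- the grading subspaces are exactly the eigenspaces of L0 = μ 1 ω
    set L0 : Module.End ℂ V := μ 1 ω with hL0
    have hVE : ∀ n : ℤ, Vg n ≤ L0.eigenspace (n : ℂ) := fun n x hx =>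
      Module.End.mem_eigenspace_iff.mpr (hω n x hx)
    have hEV : ∀ n : ℤ, L0.eigenspace (n : ℂ) ≤ Vg n := by
      intro n y hy
      have htop : (⨆ m, Vg m) = ⊤ := hInt.submodule_iSup_eq_top
      have hsup : Vg n ⊔ (⨆ m, ⨆ _ : m ≠ n, Vg m) = ⊤ := by
        rw [eq_top_iff, ← htop]
        refine iSup_le fun m => ?_
        rcases eq_or_ne m n with rfl | h
        · exact le_sup_left
        · exact le_trans (le_iSup₂ (f := fun m (_ : m ≠ n) => Vg m) m h) le_sup_right
      obtain ⟨a, ha, b, hb, hab⟩ := Submodule.mem_sup.mp (hsup ▸ Submodule.mem_top (x := y))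
      have hbE : b ∈ ⨆ c : ℂ, ⨆ _ : c ≠ (n : ℂ), L0.eigenspace c := by
        refine (iSup_le fun m => iSup_le fun hm => ?_ : (⨆ m, ⨆ _ : m ≠ n, Vg m) ≤ _) hb
        exact le_trans (hVE m)
          (le_iSup₂ (f := fun c (_ : c ≠ (n : ℂ)) => L0.eigenspace c) (m : ℂ)
            (by exact_mod_cast hm))
      have hbn : b ∈ L0.eigenspace (n : ℂ) := by
        have : b = y - a := by rw [← hab]; abel
        rw [this]; exact Submodule.sub_mem _ hy (hVE n ha)
      have hdisj := iSupIndep_def.mp L0.eigenspaces_iSupIndep (n : ℂ)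
      have hb0 : b = 0 := (Submodule.disjoint_def.mp hdisj) b hbn hbE
      rw [← hab, hb0, add_zero]; exact ha
    -- φ maps each graded piece into itself
    have hmap : ∀ n : ℤ, ∀ x ∈ Vg n, φ x ∈ Vg n := by
      intro n x hx
      refine hEV n (Module.End.mem_eigenspace_iff.mpr ?_)
      have : φ (μ 1 ω x) = μ 1 ω (φ x) := by rw [hmul 1 ω x, hom]
      rw [hω n x hx, map_smul] at this
      exact this.symm
    -- surjectivity on each finite-dimensional piece, hence globally
    have hsurj : Function.Surjective φ := by
      rw [← LinearMap.range_eq_top]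
      rw [eq_top_iff, ← hInt.submodule_iSup_eq_top]
      refine iSup_le fun n => fun x hx => ?_
      haveI := hFin n
      set ψ : Vg n →ₗ[ℂ] Vg n := φ.restrict (hmap n)
      have hψinj : Function.Injective ψ := by
        intro u v huv
        have : φ u = φ v := congrArg Subtype.val huv
        exact Subtype.ext (hinj this)
      have hψsurj : Function.Surjective ψ :=
        (LinearMap.injective_iff_surjective).mp hψinj
      obtain ⟨z, hz⟩ := hψsurj ⟨x, hx⟩
      exact ⟨z, congrArg Subtype.val hz⟩
    exact ⟨hinj, hsurj⟩
  refine ⟨fun d hd => ?_, fun d1 _ d2 _ h => by simpa using h, fun φ hφ => ?_⟩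
  · have he := (der_iff_endo μ one ω d).mp hd
    exact ⟨he, endo_bij _ he⟩
  · refine ⟨φ - LinearMap.id, ?_, by simp⟩
    refine (der_iff_endo μ one ω _).mpr ?_
    have h : (φ - LinearMap.id) + LinearMap.id = φ := by abel
    rw [h]; exact hφ.1
end

section
/- On the polynomial algebra ℂ[t], define for each j ∈ ℕ the bilinear product f ∘ⱼ g := (1/j!)·(dʲf/dtʲ)·g, and let P : ℂ[t] → ℂ[t] be the linear integration operator determined by P(tᵐ) = tᵐ⁺¹/(m+1) for all m ∈ ℕ. Then for all f,g ∈ ℂ[t] and all j ∈ ℕ: (Pf) ∘ⱼ (Pg) = P((Pf) ∘ⱼ g) + P(f ∘ⱼ (Pg)). That is, P is a Rota-Baxter operator of weight 0 on the vertex algebra (ℂ[t], Y, 1) with Y(f,z)g = (e^{z d/dt}f)·g; equivalently (via the basis tₘ = tᵐ/m!) the shift operator tₘ ↦ tₘ₊₁ is a weight-0 Rota-Baxter operator on the divided power vertex algebra. -/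
open Polynomial

/-- The `j`-th component product of the vertex algebra structure on `ℂ[t]`:
`f ∘ⱼ g = (1/j!)·(dʲf/dtʲ)·g`. -/
noncomputable def compProd (j : ℕ) (f g : Polynomial ℂ) : Polynomial ℂ :=
  (j.factorial : ℂ)⁻¹ • ((⇑(derivative (R := ℂ)))^[j] f * g)

private lemma aux_deriv (P : Polynomial ℂ →ₗ[ℂ] Polynomial ℂ)
    (hP : ∀ m : ℕ, P (X ^ m) = ((m : ℂ) + 1)⁻¹ • X ^ (m + 1)) (f : Polynomial ℂ) :
    derivative (P f) = f := by
  induction f using Polynomial.induction_on' with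
  | add p q hp hq => simp [map_add, hp, hq]
  | monomial n a =>
      have hne : ((n : ℂ) + 1) ≠ 0 := Nat.cast_add_one_ne_zero n
      rw [← C_mul_X_pow_eq_monomial, ← smul_eq_C_mul, map_smul, hP, map_smul, map_smul,
        derivative_X_pow]
      push_cast
      rw [smul_smul, smul_eq_C_mul, map_mul, mul_assoc, ← mul_assoc (C ((n:ℂ)+1)⁻¹),
        ← map_mul, inv_mul_cancel₀ hne, map_one, one_mul, ← smul_eq_C_mul]

private lemma aux_coeff0 (P : Polynomial ℂ →ₗ[ℂ] Polynomial ℂ)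
    (hP : ∀ m : ℕ, P (X ^ m) = ((m : ℂ) + 1)⁻¹ • X ^ (m + 1)) (f : Polynomial ℂ) :
    (P f).coeff 0 = 0 := by
  induction f using Polynomial.induction_on' with
  | add p q hp hq => simp [map_add, hp, hq]
  | monomial n a =>
      rw [← C_mul_X_pow_eq_monomial, ← smul_eq_C_mul, map_smul, hP]
      simp [coeff_X_pow]

private lemma aux_eq (p q : Polynomial ℂ) (hd : derivative p = derivative q)
    (h0 : p.coeff 0 = q.coeff 0) : p = q := by
  ext n
  cases n with
  | zero => exact h0
  | succ n =>
      have h := congrArg (fun r => Polynomial.coeff r n) hd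
      simp only [coeff_derivative] at h
      exact mul_right_cancel₀ (Nat.cast_add_one_ne_zero n) h

/-- The integration operator `P(tᵐ) = tᵐ⁺¹/(m+1)` is a Rota-Baxter operator of
weight `0` on the vertex algebra `(ℂ[t], Y, 1)` with `Y(f,z)g = (e^{z d/dt}f)·g`. -/
theorem stmt4 (P : Polynomial ℂ →ₗ[ℂ] Polynomial ℂ)
    (hP : ∀ m : ℕ, P (X ^ m) = ((m : ℂ) + 1)⁻¹ • X ^ (m + 1)) :
    ∀ (f g : Polynomial ℂ) (j : ℕ),
      compProd j (P f) (P g) = P (compProd j (P f) g) + P (compProd j f (P g)) := by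
  intro f g j
  unfold compProd
  rw [map_smul, map_smul, ← smul_add]
  congr 1
  set u := (⇑(derivative (R := ℂ)))^[j] (P f) with hu
  have hdu : derivative u = (⇑(derivative (R := ℂ)))^[j] f := by
    rw [hu, ← Function.iterate_succ_apply' (⇑(derivative (R := ℂ))),
      Function.iterate_succ_apply (⇑(derivative (R := ℂ))), aux_deriv P hP]
  rw [← hdu, ← map_add]
  apply aux_eq
  · rw [aux_deriv P hP, derivative_mul, aux_deriv P hP]
    ring
  · rw [aux_coeff0 P hP, mul_coeff_zero, aux_coeff0 P hP]
    ring
end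

section
/- Let A be a commutative unital ℂ-algebra, d : A → A a derivation, and P : A → A a linear map such that d ∘ P = Id_A and P(x)·P(y) = P(P(x)·y) + P(x·P(y)) for all x,y ∈ A (so (A,d,P,1) is a commutative unital differential Rota-Baxter algebra of weight 0). Then for all a,b ∈ A and every j ∈ ℕ: d( (1/j!)(dʲ(Pa))·(Pb) − P((1/j!)(dʲ(Pa))·b) − P((1/j!)(dʲa)·(Pb)) ) = 0. In particular, if d is injective, then (1/j!)(dʲ(Pa))·(Pb) = P((1/j!)(dʲ(Pa))·b) + P((1/j!)(dʲa)·(Pb)) for all a,b ∈ A and j ∈ ℕ, i.e. P is a Rota-Baxter operator of weight 0 on the vertex algebra (A,Y,1) with Y(a,z)b = (e^{zd}a)·b. -/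
/-- For a commutative unital differential Rota-Baxter ℂ-algebra `(A,d,P,1)` of
weight `0`, the Rota-Baxter defect of the vertex algebra component products
`a₋ⱼ₋₁b = (1/j!)(dʲa)·b` lies in `ker d`; if `d` is injective, `P` is a
Rota-Baxter operator of weight `0` on the vertex algebra `(A, Y, 1)`. -/
theorem stmt5 {A : Type*} [CommRing A] [Algebra ℂ A]
    (d : Derivation ℂ A A) (P : A →ₗ[ℂ] A)
    (hdP : ∀ x : A, d (P x) = x)
    (hRB : ∀ x y : A, P x * P y = P (P x * y) + P (x * P y)) :
    (∀ (a b : A) (j : ℕ),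
      d ((j.factorial : ℂ)⁻¹ • ((⇑d)^[j] (P a) * P b)
        - P ((j.factorial : ℂ)⁻¹ • ((⇑d)^[j] (P a) * b))
        - P ((j.factorial : ℂ)⁻¹ • ((⇑d)^[j] a * P b))) = 0) ∧
    (Function.Injective ⇑d →
      ∀ (a b : A) (j : ℕ),
        (j.factorial : ℂ)⁻¹ • ((⇑d)^[j] (P a) * P b)
          = P ((j.factorial : ℂ)⁻¹ • ((⇑d)^[j] (P a) * b))
            + P ((j.factorial : ℂ)⁻¹ • ((⇑d)^[j] a * P b))) := by

  have key : ∀ (a b : A) (j : ℕ),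
      d ((j.factorial : ℂ)⁻¹ • ((⇑d)^[j] (P a) * P b)
        - P ((j.factorial : ℂ)⁻¹ • ((⇑d)^[j] (P a) * b))
        - P ((j.factorial : ℂ)⁻¹ • ((⇑d)^[j] a * P b))) = 0 := by
    intro a b j
    have hiter : d ((⇑d)^[j] (P a)) = (⇑d)^[j] a := by
      have := Function.iterate_succ_apply' (⇑d) j (P a)
      rw [← this, Function.iterate_succ_apply, hdP]
    simp only [map_sub, map_smul, Derivation.map_smul, hdP, Derivation.leibniz,
      hiter, smul_eq_mul, smul_add]
    rw [mul_comm ((⇑d)^[j] a) (P b)]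
    abel
  refine ⟨key, fun hinj a b j => ?_⟩
  have h0 : d ((j.factorial : ℂ)⁻¹ • ((⇑d)^[j] (P a) * P b)
        - P ((j.factorial : ℂ)⁻¹ • ((⇑d)^[j] (P a) * b))
        - P ((j.factorial : ℂ)⁻¹ • ((⇑d)^[j] a * P b))) = d 0 := by
    rw [map_zero]; exact key a b j
  linear_combination hinj h0
end

section
/- Let A be a commutative unital ℂ-algebra, d : A → A a derivation, and P : A → A a linear map such that d ∘ P = Id_A and P(x)·P(y) = P(P(x)·y) + P(x·P(y)) for all x,y ∈ A. Assume moreover that P(a)·P(b) ∈ P(A) and (dⁿa)·P(b) ∈ P(A) for all a,b ∈ A and all n ∈ ℕ. Then for all a,b ∈ A and all j ∈ ℕ: (1/j!)(dʲ(Pa))·(Pb) = P((1/j!)(dʲ(Pa))·b) + P((1/j!)(dʲa)·(Pb)); i.e. P is an ordinary Rota-Baxter operator of weight 0 on the vertex algebra (A,Y,1) with Y(a,z)b = (e^{zd}a)·b. -/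
/-- For a commutative unital differential Rota-Baxter ℂ-algebra `(A,d,P,1)` of
weight `0` such that `P(a)·P(b) ∈ P(A)` and `(dⁿa)·P(b) ∈ P(A)` for all `a,b,n`,
the operator `P` is an ordinary Rota-Baxter operator of weight `0` on the vertex
algebra `(A,Y,1)` with component products `a₋ⱼ₋₁b = (1/j!)(dʲa)·b`. -/
theorem stmt6 {A : Type*} [CommRing A] [Algebra ℂ A]
    (d : Derivation ℂ A A) (P : A →ₗ[ℂ] A)
    (hdP : ∀ x : A, d (P x) = x)
    (hRB : ∀ x y : A, P x * P y = P (P x * y) + P (x * P y))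
    (hcl1 : ∀ a b : A, P a * P b ∈ LinearMap.range P)
    (hcl2 : ∀ (a b : A) (n : ℕ), (⇑d)^[n] a * P b ∈ LinearMap.range P) :
    ∀ (a b : A) (j : ℕ),
      (j.factorial : ℂ)⁻¹ • ((⇑d)^[j] (P a) * P b)
        = P ((j.factorial : ℂ)⁻¹ • ((⇑d)^[j] (P a) * b))
          + P ((j.factorial : ℂ)⁻¹ • ((⇑d)^[j] a * P b)) := by
  intro a b j
  suffices h : (⇑d)^[j] (P a) * P b
      = P ((⇑d)^[j] (P a) * b) + P ((⇑d)^[j] a * P b) by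
    rw [map_smul, map_smul, ← smul_add, h]
  cases j with
  | zero => simpa using hRB a b
  | succ i =>
    obtain ⟨c, hc⟩ := hcl2 a b i
    have h1 : (⇑d)^[i + 1] (P a) = (⇑d)^[i] a := by
      rw [Function.iterate_succ_apply, hdP]
    have hc2 : c = (⇑d)^[i] a * b + (⇑d)^[i + 1] a * P b := by
      calc c = d (P c) := (hdP c).symm
        _ = d ((⇑d)^[i] a * P b) := by rw [hc]
        _ = _ := by
            rw [Derivation.leibniz, hdP, smul_eq_mul, smul_eq_mul,
              Function.iterate_succ_apply']
            ring
    rw [h1, ← hc, hc2, map_add]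
end

section
/- Let V be a vector space over ℂ with ℤ-indexed bilinear products aₙb satisfying truncation, weak commutativity, and weak associativity (component forms), and let A be a commutative unital ℂ-algebra. On V̂ := V ⊗_ℂ A define, for each n ∈ ℤ, the bilinear product determined by (a ⊗ f)ₙ(b ⊗ g) := (aₙb) ⊗ (f·g). Then V̂ with these products again satisfies truncation, weak commutativity, and weak associativity. (Consequently, if (V,Y,𝟙) is a vertex algebra then (V̂,Ŷ,𝟙⊗1) is a vertex algebra.) -/
open scoped TensorProduct

section Defs

variable {W : Type*} [AddCommGroup W] [Module ℂ W]

/-- Truncation: for all `a, b` the products `aₙb` vanish for `n` large. -/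
def Truncation (μ : ℤ → W → W → W) : Prop :=
  ∀ a b : W, ∃ N : ℤ, ∀ n ≥ N, μ n a b = 0

/-- The `N`-commutativity identity for `(α,β;γ,δ)` at `(a,b,c)`: the coefficient
form of `(z₁−z₂)^N α(a,z₁)β(b,z₂)c = (z₁−z₂)^N γ(b,z₂)δ(a,z₁)c`. -/
def NCommId (α β γ δ : ℤ → W → W → W) (N : ℕ) (a b c : W) : Prop :=
  ∀ m n : ℤ,
    ∑ i ∈ Finset.range (N + 1),
        ((-1 : ℂ) ^ i * (N.choose i : ℂ)) • α (m + (N : ℤ) - (i : ℤ)) a (β (n + (i : ℤ)) b c)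
      = ∑ i ∈ Finset.range (N + 1),
        ((-1 : ℂ) ^ i * (N.choose i : ℂ)) • γ (n + (i : ℤ)) b (δ (m + (N : ℤ) - (i : ℤ)) a c)

/-- The generalized binomial coefficient `B(x,j) = x(x−1)⋯(x−j+1)/j!`. -/
noncomputable def genBinom (x : ℂ) (j : ℕ) : ℂ :=
  (∏ i ∈ Finset.range j, (x - (i : ℂ))) / (j.factorial : ℂ)

/-- The `N`-associativity identity for `(α,β;γ,δ)` at `(a,b,c)`: the coefficient
form of `(z₀+z₂)^N β(α(a,z₀)b,z₂)c = (z₀+z₂)^N γ(a,z₀+z₂)δ(b,z₂)c`, where the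
right-hand sum over `m ∈ ℤ, m ≤ N+p` is reindexed by `m ↦ N+p−m` with `m ∈ ℕ`. -/
def NAssocId (α β γ δ : ℤ → W → W → W) (N : ℕ) (a b c : W) : Prop :=
  ∀ p q : ℤ,
    ∑ i ∈ Finset.range (N + 1),
        (N.choose i : ℂ) • β (q + (N : ℤ) - (i : ℤ)) (α (p + (i : ℤ)) a b) c
      = ∑ᶠ m : ℕ,
        genBinom ((m : ℂ) - (p : ℂ) - 1) m • γ ((N : ℤ) + p - (m : ℤ)) a (δ (q + (m : ℤ)) b c)

/-- Weak commutativity in component form. -/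
def WeakComm (μ : ℤ → W → W → W) : Prop :=
  ∀ a b : W, ∃ N : ℕ, ∀ c : W, NCommId μ μ μ μ N a b c

/-- Weak associativity in component form. -/
def WeakAssoc (μ : ℤ → W → W → W) : Prop :=
  ∀ a c : W, ∃ N : ℕ, ∀ b : W, NAssocId μ μ μ μ N a b c

end Defs

section Aux
variable {W : Type*} [AddCommGroup W] [Module ℂ W]

lemma genBinom_zero (x : ℂ) : genBinom x 0 = 1 := by simp [genBinom]

lemma genBinom_pascal (x : ℂ) (j : ℕ) :
    genBinom x (j + 1) = genBinom (x - 1) (j + 1) + genBinom (x - 1) j := by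
  have hfac : ((j+1).factorial : ℂ) ≠ 0 := Nat.cast_ne_zero.2 (Nat.factorial_ne_zero _)
  have hfac' : ((j).factorial : ℂ) ≠ 0 := Nat.cast_ne_zero.2 (Nat.factorial_ne_zero _)
  have h1 : ∏ i ∈ Finset.range (j+1), (x - (i:ℂ))
      = x * ∏ i ∈ Finset.range j, (x - 1 - (i:ℂ)) := by
    rw [Finset.prod_range_succ']
    have : ∀ i ∈ Finset.range j, (x - ((i+1 : ℕ):ℂ)) = x - 1 - (i:ℂ) := by
      intro i _; push_cast; ring
    rw [Finset.prod_congr rfl this]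
    push_cast; ring
  have h2 : ∏ i ∈ Finset.range (j+1), (x - 1 - (i:ℂ))
      = (∏ i ∈ Finset.range j, (x - 1 - (i:ℂ))) * (x - 1 - (j:ℂ)) := Finset.prod_range_succ _ _
  unfold genBinom
  rw [show (∏ i ∈ Finset.range (j+1), ((x-1) - (i:ℂ))) = ∏ i ∈ Finset.range (j+1), (x - 1 - (i:ℂ)) from rfl]
  rw [h1, h2, Nat.factorial_succ]
  have hD : ((j:ℂ)+1) ≠ 0 := by exact_mod_cast (Nat.cast_ne_zero (R:=ℂ)).2 (Nat.succ_ne_zero j)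
  push_cast
  field_simp
  ring

lemma binom_sum_succ (N : ℕ) (T : ℕ → W) :
    ∑ i ∈ Finset.range (N + 1 + 1), ((N+1).choose i : ℂ) • T i
      = ∑ i ∈ Finset.range (N + 1), (N.choose i : ℂ) • T i
        + ∑ i ∈ Finset.range (N + 1), (N.choose i : ℂ) • T (i + 1) := by
  rw [Finset.sum_range_succ']
  have h : ∀ i ∈ Finset.range (N+1), (((N+1).choose (i+1) : ℕ):ℂ) • T (i+1)
      = ((N.choose i : ℕ):ℂ) • T (i+1) + ((N.choose (i+1) : ℕ):ℂ) • T (i+1) := by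
    intro i _
    rw [Nat.choose_succ_succ]
    push_cast
    rw [add_smul]
  rw [Finset.sum_congr rfl h, Finset.sum_add_distrib]
  have h2 : (∑ i ∈ Finset.range (N+1), ((N.choose (i+1):ℕ):ℂ) • T (i+1))
      + (((N+1).choose 0:ℕ):ℂ) • T 0 = ∑ i ∈ Finset.range (N+1), ((N.choose i:ℕ):ℂ) • T i := by
    have := (Finset.sum_range_succ' (fun i => ((N.choose i:ℕ):ℂ) • T i) (N+1)).symm
    simp only [Nat.choose_zero_right] at this ⊢
    rw [this, Finset.sum_range_succ, Nat.choose_succ_self]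
    simp
  rw [← h2]; abel

lemma alt_binom_sum_succ (N : ℕ) (T : ℕ → W) :
    ∑ i ∈ Finset.range (N + 1 + 1), ((-1:ℂ)^i * ((N+1).choose i : ℂ)) • T i
      = ∑ i ∈ Finset.range (N + 1), ((-1:ℂ)^i * (N.choose i : ℂ)) • T i
        - ∑ i ∈ Finset.range (N + 1), ((-1:ℂ)^i * (N.choose i : ℂ)) • T (i + 1) := by
  rw [Finset.sum_range_succ']
  have h : ∀ i ∈ Finset.range (N+1), ((-1:ℂ)^(i+1) * (((N+1).choose (i+1) : ℕ):ℂ)) • T (i+1)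
      = (-((-1:ℂ)^i * (N.choose i : ℂ))) • T (i+1)
        + ((-1:ℂ)^(i+1) * ((N.choose (i+1) : ℕ):ℂ)) • T (i+1) := by
    intro i _
    rw [Nat.choose_succ_succ]
    push_cast
    rw [← add_smul]
    congr 1
    ring
  rw [Finset.sum_congr rfl h, Finset.sum_add_distrib]
  have h2 : (∑ i ∈ Finset.range (N+1), ((-1:ℂ)^(i+1) * ((N.choose (i+1):ℕ):ℂ)) • T (i+1))
      + ((-1:ℂ)^0 * (((N+1).choose 0:ℕ):ℂ)) • T 0
      = ∑ i ∈ Finset.range (N+1), ((-1:ℂ)^i * ((N.choose i:ℕ):ℂ)) • T i := by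
    have := (Finset.sum_range_succ' (fun i => ((-1:ℂ)^i * ((N.choose i:ℕ):ℂ)) • T i) (N+1)).symm
    simp only [Nat.choose_zero_right] at this ⊢
    rw [this, Finset.sum_range_succ, Nat.choose_succ_self]
    simp
  have h3 : ∑ i ∈ Finset.range (N+1), (-((-1:ℂ)^i * (N.choose i : ℂ))) • T (i+1)
      = - ∑ i ∈ Finset.range (N+1), ((-1:ℂ)^i * (N.choose i : ℂ)) • T (i+1) := by
    rw [← Finset.sum_neg_distrib]
    exact Finset.sum_congr rfl fun i _ => by rw [neg_smul]
  rw [h3, ← h2]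
  abel

lemma genBinom_sum_step (t : ℂ) (U : ℕ → W) (M : ℕ) (hU : U (M+1) = 0) :
    ∑ m ∈ Finset.range (M+1), genBinom ((m:ℂ) + t) m • U m
      = ∑ m ∈ Finset.range (M+1), genBinom ((m:ℂ) + t) m • U (m+1)
        + ∑ m ∈ Finset.range (M+1), genBinom ((m:ℂ) + t - 1) m • U m := by
  have hgs : ∀ m : ℕ, (genBinom (((m+1:ℕ):ℂ) + t) (m+1) - genBinom (((m+1:ℕ):ℂ) + t - 1) (m+1)) • U (m+1)
      = genBinom ((m:ℂ) + t) m • U (m+1) := by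
    intro m
    have hp := genBinom_pascal (((m:ℂ)+1) + t) m
    have e1 : (((m+1:ℕ):ℂ) + t) = ((m:ℂ)+1) + t := by push_cast; ring
    have e3 : ((m:ℂ)+1) + t - 1 = (m:ℂ) + t := by ring
    rw [e1, hp, e3, add_sub_cancel_left]
  have key : (∑ m ∈ Finset.range (M+1), genBinom ((m:ℂ) + t) m • U m)
      - ∑ m ∈ Finset.range (M+1), genBinom ((m:ℂ) + t - 1) m • U m
      = ∑ m ∈ Finset.range (M+1), genBinom ((m:ℂ) + t) m • U (m+1) := by
    rw [← Finset.sum_sub_distrib]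
    have : ∀ m ∈ Finset.range (M+1),
        genBinom ((m:ℂ) + t) m • U m - genBinom ((m:ℂ) + t - 1) m • U m
          = (genBinom ((m:ℂ) + t) m - genBinom ((m:ℂ) + t - 1) m) • U m := by
      intro m _; rw [sub_smul]
    rw [Finset.sum_congr rfl this]
    rw [Finset.sum_range_succ' (fun m => (genBinom ((m:ℂ) + t) m - genBinom ((m:ℂ) + t - 1) m) • U m) M]
    simp only [hgs]
    rw [Finset.sum_range_succ (fun m => genBinom ((m:ℂ) + t) m • U (m+1)) M]
    simp [genBinom_zero, hU]
  exact sub_eq_iff_eq_add.mp key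

lemma finsum_trunc (f : ℕ → W) (M : ℕ) (h : ∀ m, M ≤ m → f m = 0) :
    ∑ᶠ m, f m = ∑ m ∈ Finset.range M, f m := by
  apply finsum_eq_sum_of_support_subset
  intro m hm
  simp only [Finset.coe_range, Set.mem_Iio]
  by_contra hc
  exact hm (h m (le_of_not_gt hc))

end Aux

section Succ
variable {W : Type*} [AddCommGroup W] [Module ℂ W]

lemma NCommId_succ {α β γ δ : ℤ → W → W → W} {N : ℕ} {a b c : W}
    (h : NCommId α β γ δ N a b c) : NCommId α β γ δ (N+1) a b c := by
  intro m n
  rw [alt_binom_sum_succ N (fun i => α (m + ((N+1:ℕ):ℤ) - (i:ℤ)) a (β (n + (i:ℤ)) b c)),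
      alt_binom_sum_succ N (fun i => γ (n + (i:ℤ)) b (δ (m + ((N+1:ℕ):ℤ) - (i:ℤ)) a c))]
  have eL1 : ∑ i ∈ Finset.range (N+1), ((-1:ℂ)^i * (N.choose i : ℂ)) • α (m + ((N+1:ℕ):ℤ) - (i:ℤ)) a (β (n + (i:ℤ)) b c)
      = ∑ i ∈ Finset.range (N+1), ((-1:ℂ)^i * (N.choose i : ℂ)) • α ((m+1) + (N:ℤ) - (i:ℤ)) a (β (n + (i:ℤ)) b c) := by
    refine Finset.sum_congr rfl fun i _ => ?_
    rw [show m + ((N+1:ℕ):ℤ) - (i:ℤ) = (m+1) + (N:ℤ) - (i:ℤ) by push_cast; ring]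
  have eL2 : ∑ i ∈ Finset.range (N+1), ((-1:ℂ)^i * (N.choose i : ℂ)) • α (m + ((N+1:ℕ):ℤ) - ((i+1:ℕ):ℤ)) a (β (n + ((i+1:ℕ):ℤ)) b c)
      = ∑ i ∈ Finset.range (N+1), ((-1:ℂ)^i * (N.choose i : ℂ)) • α (m + (N:ℤ) - (i:ℤ)) a (β ((n+1) + (i:ℤ)) b c) := by
    refine Finset.sum_congr rfl fun i _ => ?_
    rw [show m + ((N+1:ℕ):ℤ) - ((i+1:ℕ):ℤ) = m + (N:ℤ) - (i:ℤ) by push_cast; ring,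
        show n + ((i+1:ℕ):ℤ) = (n+1) + (i:ℤ) by push_cast; ring]
  have eR1 : ∑ i ∈ Finset.range (N+1), ((-1:ℂ)^i * (N.choose i : ℂ)) • γ (n + (i:ℤ)) b (δ (m + ((N+1:ℕ):ℤ) - (i:ℤ)) a c)
      = ∑ i ∈ Finset.range (N+1), ((-1:ℂ)^i * (N.choose i : ℂ)) • γ (n + (i:ℤ)) b (δ ((m+1) + (N:ℤ) - (i:ℤ)) a c) := by
    refine Finset.sum_congr rfl fun i _ => ?_
    rw [show m + ((N+1:ℕ):ℤ) - (i:ℤ) = (m+1) + (N:ℤ) - (i:ℤ) by push_cast; ring]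
  have eR2 : ∑ i ∈ Finset.range (N+1), ((-1:ℂ)^i * (N.choose i : ℂ)) • γ (n + ((i+1:ℕ):ℤ)) b (δ (m + ((N+1:ℕ):ℤ) - ((i+1:ℕ):ℤ)) a c)
      = ∑ i ∈ Finset.range (N+1), ((-1:ℂ)^i * (N.choose i : ℂ)) • γ ((n+1) + (i:ℤ)) b (δ (m + (N:ℤ) - (i:ℤ)) a c) := by
    refine Finset.sum_congr rfl fun i _ => ?_
    rw [show m + ((N+1:ℕ):ℤ) - ((i+1:ℕ):ℤ) = m + (N:ℤ) - (i:ℤ) by push_cast; ring,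
        show n + ((i+1:ℕ):ℤ) = (n+1) + (i:ℤ) by push_cast; ring]
  rw [eL1, eL2, eR1, eR2, h (m+1) n, h m (n+1)]

lemma NCommId_mono {α β γ δ : ℤ → W → W → W} {N N' : ℕ} {a b c : W}
    (hle : N ≤ N') (h : NCommId α β γ δ N a b c) : NCommId α β γ δ N' a b c := by
  induction N', hle using Nat.le_induction with
  | base => exact h
  | succ n hn ih => exact NCommId_succ ih

lemma NAssocId_succ {α β γ δ : ℤ → W → W → W} {N : ℕ} {a b c : W}
    (hγ : ∀ n : ℤ, γ n a 0 = 0) (K : ℤ) (hK : ∀ n ≥ K, δ n b c = 0)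
    (h : NAssocId α β γ δ N a b c) : NAssocId α β γ δ (N+1) a b c := by
  intro p q
  rw [binom_sum_succ N (fun i => β (q + ((N+1:ℕ):ℤ) - (i:ℤ)) (α (p + (i:ℤ)) a b) c)]
  have eL1 : ∑ i ∈ Finset.range (N+1), ((N.choose i : ℕ):ℂ) • β (q + ((N+1:ℕ):ℤ) - (i:ℤ)) (α (p + (i:ℤ)) a b) c
      = ∑ i ∈ Finset.range (N+1), ((N.choose i : ℕ):ℂ) • β ((q+1) + (N:ℤ) - (i:ℤ)) (α (p + (i:ℤ)) a b) c := by
    refine Finset.sum_congr rfl fun i _ => ?_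
    rw [show q + ((N+1:ℕ):ℤ) - (i:ℤ) = (q+1) + (N:ℤ) - (i:ℤ) by push_cast; ring]
  have eL2 : ∑ i ∈ Finset.range (N+1), ((N.choose i : ℕ):ℂ) • β (q + ((N+1:ℕ):ℤ) - ((i+1:ℕ):ℤ)) (α (p + ((i+1:ℕ):ℤ)) a b) c
      = ∑ i ∈ Finset.range (N+1), ((N.choose i : ℕ):ℂ) • β (q + (N:ℤ) - (i:ℤ)) (α ((p+1) + (i:ℤ)) a b) c := by
    refine Finset.sum_congr rfl fun i _ => ?_
    rw [show q + ((N+1:ℕ):ℤ) - ((i+1:ℕ):ℤ) = q + (N:ℤ) - (i:ℤ) by push_cast; ring,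
        show p + ((i+1:ℕ):ℤ) = (p+1) + (i:ℤ) by push_cast; ring]
  rw [eL1, eL2, h p (q+1), h (p+1) q]
  -- now everything is finsums; convert to finite sums
  set M : ℕ := (K - q).toNat with hM
  have hMq : ∀ m : ℕ, M ≤ m → K ≤ q + (m:ℤ) := by
    intro m hm
    have h1 : (K - q) ≤ (M:ℤ) := Int.self_le_toNat _
    have h2 : (M:ℤ) ≤ (m:ℤ) := by exact_mod_cast hm
    omega
  set U : ℕ → W := fun m => γ (((N+1:ℕ):ℤ) + p - (m:ℤ)) a (δ (q + (m:ℤ)) b c) with hU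
  have hUz : ∀ m : ℕ, M ≤ m → U m = 0 := by
    intro m hm
    simp only [hU]
    rw [hK _ (hMq m hm), hγ]
  have c1 : ∑ᶠ m : ℕ, genBinom ((m:ℂ) - (p:ℂ) - 1) m • γ ((N:ℤ) + p - (m:ℤ)) a (δ ((q+1) + (m:ℤ)) b c)
      = ∑ m ∈ Finset.range (M+1), genBinom ((m:ℂ) + (-(p:ℂ)-1)) m • U (m+1) := by
    rw [finsum_trunc _ (M+1) ?_]
    · refine Finset.sum_congr rfl fun m _ => ?_
      rw [show ((m:ℂ) - (p:ℂ) - 1) = (m:ℂ) + (-(p:ℂ)-1) by ring]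
      simp only [hU]
      rw [show ((N+1:ℕ):ℤ) + p - ((m+1:ℕ):ℤ) = (N:ℤ) + p - (m:ℤ) by push_cast; ring,
          show q + ((m+1:ℕ):ℤ) = (q+1) + (m:ℤ) by push_cast; ring]
    · intro m hm
      have : K ≤ (q+1) + (m:ℤ) := by have := hMq m (le_trans (Nat.le_succ M) hm); omega
      rw [hK _ this, hγ, smul_zero]
  have c2 : ∑ᶠ m : ℕ, genBinom ((m:ℂ) - ((p+1:ℤ):ℂ) - 1) m • γ ((N:ℤ) + (p+1) - (m:ℤ)) a (δ (q + (m:ℤ)) b c)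
      = ∑ m ∈ Finset.range (M+1), genBinom ((m:ℂ) + (-(p:ℂ)-1) - 1) m • U m := by
    rw [finsum_trunc _ (M+1) ?_]
    · refine Finset.sum_congr rfl fun m _ => ?_
      rw [show ((m:ℂ) - ((p+1:ℤ):ℂ) - 1) = (m:ℂ) + (-(p:ℂ)-1) - 1 by push_cast; ring]
      simp only [hU]
      rw [show ((N+1:ℕ):ℤ) + p - (m:ℤ) = (N:ℤ) + (p+1) - (m:ℤ) by push_cast; ring]
    · intro m hm
      have : K ≤ q + (m:ℤ) := hMq m (le_trans (Nat.le_succ M) hm)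
      rw [hK _ this, hγ, smul_zero]
  have c3 : ∑ᶠ m : ℕ, genBinom ((m:ℂ) - (p:ℂ) - 1) m • γ (((N+1:ℕ):ℤ) + p - (m:ℤ)) a (δ (q + (m:ℤ)) b c)
      = ∑ m ∈ Finset.range (M+1), genBinom ((m:ℂ) + (-(p:ℂ)-1)) m • U m := by
    rw [finsum_trunc _ (M+1) ?_]
    · refine Finset.sum_congr rfl fun m _ => ?_
      rw [show ((m:ℂ) - (p:ℂ) - 1) = (m:ℂ) + (-(p:ℂ)-1) by ring]
    · intro m hm
      have : K ≤ q + (m:ℤ) := hMq m (le_trans (Nat.le_succ M) hm)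
      rw [hK _ this, hγ, smul_zero]
  rw [c1, c2, c3]
  exact (genBinom_sum_step (-(p:ℂ)-1) U M (hUz (M+1) (Nat.le_succ M))).symm

lemma NAssocId_mono {α β γ δ : ℤ → W → W → W} {N N' : ℕ} {a b c : W}
    (hγ : ∀ n : ℤ, γ n a 0 = 0) (K : ℤ) (hK : ∀ n ≥ K, δ n b c = 0)
    (hle : N ≤ N') (h : NAssocId α β γ δ N a b c) : NAssocId α β γ δ N' a b c := by
  induction N', hle using Nat.le_induction with
  | base => exact h
  | succ n hn ih => exact NAssocId_succ hγ K hK ih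

end Succ

section Add
variable {W : Type*} [AddCommGroup W] [Module ℂ W] (μL : ℤ → W →ₗ[ℂ] W →ₗ[ℂ] W)

lemma NCommId_add_a {N : ℕ} {a a' b c : W}
    (h : NCommId (fun n x y => μL n x y) (fun n x y => μL n x y) (fun n x y => μL n x y) (fun n x y => μL n x y) N a b c)
    (h' : NCommId (fun n x y => μL n x y) (fun n x y => μL n x y) (fun n x y => μL n x y) (fun n x y => μL n x y) N a' b c) :
    NCommId (fun n x y => μL n x y) (fun n x y => μL n x y) (fun n x y => μL n x y) (fun n x y => μL n x y) N (a + a') b c := by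
  intro m n
  simp only [map_add, LinearMap.add_apply, smul_add, Finset.sum_add_distrib]
  rw [h m n, h' m n]

lemma NCommId_add_b {N : ℕ} {a b b' c : W}
    (h : NCommId (fun n x y => μL n x y) (fun n x y => μL n x y) (fun n x y => μL n x y) (fun n x y => μL n x y) N a b c)
    (h' : NCommId (fun n x y => μL n x y) (fun n x y => μL n x y) (fun n x y => μL n x y) (fun n x y => μL n x y) N a b' c) :
    NCommId (fun n x y => μL n x y) (fun n x y => μL n x y) (fun n x y => μL n x y) (fun n x y => μL n x y) N a (b + b') c := by
  intro m n
  simp only [map_add, LinearMap.add_apply, smul_add, Finset.sum_add_distrib]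
  rw [h m n, h' m n]

lemma NCommId_add_c {N : ℕ} {a b c c' : W}
    (h : NCommId (fun n x y => μL n x y) (fun n x y => μL n x y) (fun n x y => μL n x y) (fun n x y => μL n x y) N a b c)
    (h' : NCommId (fun n x y => μL n x y) (fun n x y => μL n x y) (fun n x y => μL n x y) (fun n x y => μL n x y) N a b c') :
    NCommId (fun n x y => μL n x y) (fun n x y => μL n x y) (fun n x y => μL n x y) (fun n x y => μL n x y) N a b (c + c') := by
  intro m n
  simp only [map_add, LinearMap.add_apply, smul_add, Finset.sum_add_distrib]
  rw [h m n, h' m n]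

end Add

section AddAssoc
variable {W : Type*} [AddCommGroup W] [Module ℂ W] (μL : ℤ → W →ₗ[ℂ] W →ₗ[ℂ] W)

/-- Convert the finsum in `NAssocId` (for products given by `μL`) to a finite sum,
given a truncation bound for the pair in the `δ` slot. -/
lemma assoc_finsum_conv {N : ℕ} (p q : ℤ) (x b c : W) (M : ℕ)
    (hz : ∀ m : ℕ, M ≤ m → μL (q + (m:ℤ)) b c = 0) :
    ∑ᶠ m : ℕ, genBinom ((m : ℂ) - (p : ℂ) - 1) m • μL ((N : ℤ) + p - (m : ℤ)) x (μL (q + (m : ℤ)) b c)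
      = ∑ m ∈ Finset.range M, genBinom ((m : ℂ) - (p : ℂ) - 1) m • μL ((N : ℤ) + p - (m : ℤ)) x (μL (q + (m : ℤ)) b c) := by
  refine finsum_trunc _ M fun m hm => ?_
  rw [hz m hm]
  simp

lemma NAssocId_add_a {N : ℕ} {a a' b c : W} (K : ℤ) (hK : ∀ n ≥ K, μL n b c = 0)
    (h : NAssocId (fun n x y => μL n x y) (fun n x y => μL n x y) (fun n x y => μL n x y) (fun n x y => μL n x y) N a b c)
    (h' : NAssocId (fun n x y => μL n x y) (fun n x y => μL n x y) (fun n x y => μL n x y) (fun n x y => μL n x y) N a' b c) :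
    NAssocId (fun n x y => μL n x y) (fun n x y => μL n x y) (fun n x y => μL n x y) (fun n x y => μL n x y) N (a + a') b c := by
  intro p q
  have H := h p q
  have H' := h' p q
  set M : ℕ := (K - q).toNat with hM
  have hz : ∀ m : ℕ, M ≤ m → μL (q + (m:ℤ)) b c = 0 := by
    intro m hm
    refine hK _ ?_
    have h1 : (K - q) ≤ (M:ℤ) := Int.self_le_toNat _
    have h2 : (M:ℤ) ≤ (m:ℤ) := by exact_mod_cast hm
    omega
  rw [assoc_finsum_conv μL p q a b c M hz] at H
  rw [assoc_finsum_conv μL p q a' b c M hz] at H'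
  rw [assoc_finsum_conv μL p q (a + a') b c M hz]
  simp only [map_add, LinearMap.add_apply, smul_add, Finset.sum_add_distrib]
  rw [H, H']

lemma NAssocId_add_b {N : ℕ} {a b b' c : W} (K K' : ℤ)
    (hK : ∀ n ≥ K, μL n b c = 0) (hK' : ∀ n ≥ K', μL n b' c = 0)
    (h : NAssocId (fun n x y => μL n x y) (fun n x y => μL n x y) (fun n x y => μL n x y) (fun n x y => μL n x y) N a b c)
    (h' : NAssocId (fun n x y => μL n x y) (fun n x y => μL n x y) (fun n x y => μL n x y) (fun n x y => μL n x y) N a b' c) :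
    NAssocId (fun n x y => μL n x y) (fun n x y => μL n x y) (fun n x y => μL n x y) (fun n x y => μL n x y) N a (b + b') c := by
  intro p q
  have H := h p q
  have H' := h' p q
  set M : ℕ := (max K K' - q).toNat with hM
  have hle : ∀ m : ℕ, M ≤ m → max K K' ≤ q + (m:ℤ) := by
    intro m hm
    have h1 : (max K K' - q) ≤ (M:ℤ) := Int.self_le_toNat _
    have h2 : (M:ℤ) ≤ (m:ℤ) := by exact_mod_cast hm
    omega
  have hz : ∀ m : ℕ, M ≤ m → μL (q + (m:ℤ)) b c = 0 := fun m hm =>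
    hK _ (le_trans (le_max_left _ _) (hle m hm))
  have hz' : ∀ m : ℕ, M ≤ m → μL (q + (m:ℤ)) b' c = 0 := fun m hm =>
    hK' _ (le_trans (le_max_right _ _) (hle m hm))
  have hzz : ∀ m : ℕ, M ≤ m → μL (q + (m:ℤ)) (b + b') c = 0 := by
    intro m hm
    simp only [map_add, LinearMap.add_apply, hz m hm, hz' m hm, add_zero]
  rw [assoc_finsum_conv μL p q a b c M hz] at H
  rw [assoc_finsum_conv μL p q a b' c M hz'] at H'
  rw [assoc_finsum_conv μL p q a (b + b') c M hzz]
  simp only [map_add, LinearMap.add_apply, smul_add, Finset.sum_add_distrib]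
  rw [H, H']

lemma NAssocId_add_c {N : ℕ} {a b c c' : W} (K K' : ℤ)
    (hK : ∀ n ≥ K, μL n b c = 0) (hK' : ∀ n ≥ K', μL n b c' = 0)
    (h : NAssocId (fun n x y => μL n x y) (fun n x y => μL n x y) (fun n x y => μL n x y) (fun n x y => μL n x y) N a b c)
    (h' : NAssocId (fun n x y => μL n x y) (fun n x y => μL n x y) (fun n x y => μL n x y) (fun n x y => μL n x y) N a b c') :
    NAssocId (fun n x y => μL n x y) (fun n x y => μL n x y) (fun n x y => μL n x y) (fun n x y => μL n x y) N a b (c + c') := by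
  intro p q
  have H := h p q
  have H' := h' p q
  set M : ℕ := (max K K' - q).toNat with hM
  have hle : ∀ m : ℕ, M ≤ m → max K K' ≤ q + (m:ℤ) := by
    intro m hm
    have h1 : (max K K' - q) ≤ (M:ℤ) := Int.self_le_toNat _
    have h2 : (M:ℤ) ≤ (m:ℤ) := by exact_mod_cast hm
    omega
  have hz : ∀ m : ℕ, M ≤ m → μL (q + (m:ℤ)) b c = 0 := fun m hm =>
    hK _ (le_trans (le_max_left _ _) (hle m hm))
  have hz' : ∀ m : ℕ, M ≤ m → μL (q + (m:ℤ)) b c' = 0 := fun m hm =>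
    hK' _ (le_trans (le_max_right _ _) (hle m hm))
  have hzz : ∀ m : ℕ, M ≤ m → μL (q + (m:ℤ)) b (c + c') = 0 := by
    intro m hm
    simp only [map_add, hz m hm, hz' m hm, add_zero]
  rw [assoc_finsum_conv μL p q a b c M hz] at H
  rw [assoc_finsum_conv μL p q a b c' M hz'] at H'
  rw [assoc_finsum_conv μL p q a b (c + c') M hzz]
  simp only [map_add, LinearMap.add_apply, smul_add, Finset.sum_add_distrib]
  rw [H, H']

end AddAssoc


/-- Tensoring a vertex-algebra-type structure with a commutative unital
ℂ-algebra preserves truncation, weak commutativity and weak associativity. -/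
theorem stmt10 {V : Type*} [AddCommGroup V] [Module ℂ V]
    (μ : ℤ → V →ₗ[ℂ] V →ₗ[ℂ] V)
    (htr : Truncation (fun n (a b : V) => μ n a b))
    (hwc : WeakComm (fun n (a b : V) => μ n a b))
    (hwa : WeakAssoc (fun n (a b : V) => μ n a b))
    (A : Type*) [CommRing A] [Algebra ℂ A]
    (μhat : ℤ → (V ⊗[ℂ] A) →ₗ[ℂ] (V ⊗[ℂ] A) →ₗ[ℂ] (V ⊗[ℂ] A))
    (hμhat : ∀ (n : ℤ) (a b : V) (f g : A),
      μhat n (a ⊗ₜ[ℂ] f) (b ⊗ₜ[ℂ] g) = (μ n a b) ⊗ₜ[ℂ] (f * g)) :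
    Truncation (fun n (x y : V ⊗[ℂ] A) => μhat n x y) ∧
    WeakComm (fun n (x y : V ⊗[ℂ] A) => μhat n x y) ∧
    WeakAssoc (fun n (x y : V ⊗[ℂ] A) => μhat n x y) := by
  have htrhat : Truncation (fun n (x y : V ⊗[ℂ] A) => μhat n x y) := by
    intro x y
    induction x using TensorProduct.induction_on with
    | zero => exact ⟨0, fun n _ => by simp⟩
    | tmul a f =>
      induction y using TensorProduct.induction_on with
      | zero => exact ⟨0, fun n _ => by simp⟩
      | tmul b g =>
        obtain ⟨N, hN⟩ := htr a b
        refine ⟨N, fun n hn => ?_⟩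
        show ((μhat n) (a ⊗ₜ[ℂ] f)) (b ⊗ₜ[ℂ] g) = 0
        rw [hμhat n a b f g, show ((μ n) a) b = 0 from hN n hn,
          TensorProduct.zero_tmul]
      | add y1 y2 h1 h2 =>
        obtain ⟨N1, hN1⟩ := h1
        obtain ⟨N2, hN2⟩ := h2
        refine ⟨max N1 N2, fun n hn => ?_⟩
        have e1 := hN1 n (le_trans (le_max_left _ _) hn)
        have e2 := hN2 n (le_trans (le_max_right _ _) hn)
        simp only [map_add, e1, e2, add_zero]
    | add x1 x2 h1 h2 =>
      obtain ⟨N1, hN1⟩ := h1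
      obtain ⟨N2, hN2⟩ := h2
      refine ⟨max N1 N2, fun n hn => ?_⟩
      have e1 := hN1 n (le_trans (le_max_left _ _) hn)
      have e2 := hN2 n (le_trans (le_max_right _ _) hn)
      simp only [map_add, LinearMap.add_apply, e1, e2, add_zero]
  refine ⟨htrhat, ?_, ?_⟩
  · -- Weak commutativity
    intro x y
    induction x using TensorProduct.induction_on with
    | zero =>
      refine ⟨0, fun c m n => ?_⟩
      simp
    | tmul a f =>
      induction y using TensorProduct.induction_on with
      | zero =>
        refine ⟨0, fun c m n => ?_⟩
        simp
      | tmul b g =>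
        obtain ⟨N, hN⟩ := hwc a b
        refine ⟨N, fun c => ?_⟩
        induction c using TensorProduct.induction_on with
        | zero =>
          intro m n
          simp
        | tmul cc hh =>
          intro m n
          have H := hN cc m n
          simp only [hμhat, TensorProduct.smul_tmul']
          rw [← TensorProduct.sum_tmul, ← TensorProduct.sum_tmul]
          rw [show g * (f * hh) = f * (g * hh) by ring]
          exact congrArg (fun v => v ⊗ₜ[ℂ] (f * (g * hh))) H
        | add c1 c2 hc1 hc2 => exact NCommId_add_c μhat hc1 hc2
      | add y1 y2 h1 h2 =>
        obtain ⟨N1, hN1⟩ := h1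
        obtain ⟨N2, hN2⟩ := h2
        exact ⟨max N1 N2, fun c => NCommId_add_b μhat
          (NCommId_mono (le_max_left _ _) (hN1 c))
          (NCommId_mono (le_max_right _ _) (hN2 c))⟩
    | add x1 x2 h1 h2 =>
      obtain ⟨N1, hN1⟩ := h1
      obtain ⟨N2, hN2⟩ := h2
      exact ⟨max N1 N2, fun c => NCommId_add_a μhat
        (NCommId_mono (le_max_left _ _) (hN1 c))
        (NCommId_mono (le_max_right _ _) (hN2 c))⟩
  · -- Weak associativity
    intro x z
    induction x using TensorProduct.induction_on with
    | zero =>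
      refine ⟨0, fun y p q => ?_⟩
      simp
    | tmul a f =>
      induction z using TensorProduct.induction_on with
      | zero =>
        refine ⟨0, fun y p q => ?_⟩
        simp
      | tmul cc hh =>
        obtain ⟨N, hN⟩ := hwa a cc
        refine ⟨N, fun y => ?_⟩
        induction y using TensorProduct.induction_on with
        | zero =>
          intro p q
          simp
        | tmul b g =>
          intro p q
          have H := hN b p q
          obtain ⟨K, hK⟩ := htr b cc
          set M : ℕ := (K - q).toNat with hM
          have hle : ∀ m : ℕ, M ≤ m → K ≤ q + (m:ℤ) := by
            intro m hm
            have h1 : (K - q) ≤ (M:ℤ) := Int.self_le_toNat _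
            have h2 : (M:ℤ) ≤ (m:ℤ) := by exact_mod_cast hm
            omega
          have hzV : ∀ m : ℕ, M ≤ m → μ (q + (m:ℤ)) b cc = 0 := fun m hm => hK _ (hle m hm)
          have hzhat : ∀ m : ℕ, M ≤ m → μhat (q + (m:ℤ)) (b ⊗ₜ[ℂ] g) (cc ⊗ₜ[ℂ] hh) = 0 := by
            intro m hm
            rw [hμhat, hzV m hm, TensorProduct.zero_tmul]
          rw [assoc_finsum_conv μ p q a b cc M hzV] at H
          rw [finsum_trunc (fun m : ℕ =>
            genBinom ((m : ℂ) - (p : ℂ) - 1) m •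
              μhat ((N : ℤ) + p - (m : ℤ)) (a ⊗ₜ[ℂ] f) (μhat (q + (m : ℤ)) (b ⊗ₜ[ℂ] g) (cc ⊗ₜ[ℂ] hh))) M
            (fun m hm => by simp [hzhat m hm])]
          simp only [hμhat, TensorProduct.smul_tmul']
          rw [← TensorProduct.sum_tmul, ← TensorProduct.sum_tmul]
          rw [show f * g * hh = f * (g * hh) by ring]
          exact congrArg (fun v => v ⊗ₜ[ℂ] (f * (g * hh))) H
        | add y1 y2 hy1 hy2 =>
          obtain ⟨K1, hK1⟩ := htrhat y1 (cc ⊗ₜ[ℂ] hh)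
          obtain ⟨K2, hK2⟩ := htrhat y2 (cc ⊗ₜ[ℂ] hh)
          exact NAssocId_add_b μhat K1 K2 hK1 hK2 hy1 hy2
      | add z1 z2 h1 h2 =>
        obtain ⟨N1, hN1⟩ := h1
        obtain ⟨N2, hN2⟩ := h2
        refine ⟨max N1 N2, fun y => ?_⟩
        obtain ⟨K1, hK1⟩ := htrhat y z1
        obtain ⟨K2, hK2⟩ := htrhat y z2
        exact NAssocId_add_c μhat K1 K2 hK1 hK2
          (NAssocId_mono (fun n => map_zero _) K1 hK1 (le_max_left _ _) (hN1 y))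
          (NAssocId_mono (fun n => map_zero _) K2 hK2 (le_max_right _ _) (hN2 y))
    | add x1 x2 h1 h2 =>
      obtain ⟨N1, hN1⟩ := h1
      obtain ⟨N2, hN2⟩ := h2
      refine ⟨max N1 N2, fun y => ?_⟩
      obtain ⟨K, hK⟩ := htrhat y z
      exact NAssocId_add_a μhat K hK
        (NAssocId_mono (fun n => map_zero _) K hK (le_max_left _ _) (hN1 y))
        (NAssocId_mono (fun n => map_zero _) K hK (le_max_right _ _) (hN2 y))
end

section
/- Let V be a vector space over ℂ with ℤ-indexed bilinear products aₙb, let (A,·,1) be a commutative unital ℂ-algebra, and let P : A → A be a linear map with P(f)·P(g) = P(P(f)·g) + P(f·P(g)) + λ·P(f·g) for all f,g ∈ A (a Rota-Baxter operator of weight λ on A). On V̂ := V ⊗_ℂ A with products (a ⊗ f)ₙ(b ⊗ g) := (aₙb) ⊗ (f·g), the linear map P̂ := Id_V ⊗ P satisfies P̂(x)ₙP̂(y) = P̂(P̂(x)ₙy) + P̂(xₙP̂(y)) + λ·P̂(xₙy) for all x,y ∈ V̂ and n ∈ ℤ; i.e. P̂ is an ordinary Rota-Baxter operator of weight λ on V̂.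 In particular, if V is a vertex algebra then (V̂,Ŷ,𝟙⊗1,P̂) is a Rota-Baxter vertex algebra of weight λ. -/
open scoped TensorProduct

/-- Tensoring with a commutative unital Rota-Baxter ℂ-algebra `(A,P)` of weight
`lam`: the operator `Id_V ⊗ P` is an ordinary Rota-Baxter operator of weight
`lam` on `V ⊗ A` with products `(a⊗f)ₙ(b⊗g) = (aₙb) ⊗ (f·g)`. -/
theorem stmt11 {V : Type*} [AddCommGroup V] [Module ℂ V]
    (μ : ℤ → V →ₗ[ℂ] V →ₗ[ℂ] V)
    (A : Type*) [CommRing A] [Algebra ℂ A]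
    (lam : ℂ) (P : A →ₗ[ℂ] A)
    (hP : ∀ f g : A, P f * P g = P (P f * g) + P (f * P g) + lam • P (f * g))
    (μhat : ℤ → (V ⊗[ℂ] A) →ₗ[ℂ] (V ⊗[ℂ] A) →ₗ[ℂ] (V ⊗[ℂ] A))
    (hμhat : ∀ (n : ℤ) (a b : V) (f g : A),
      μhat n (a ⊗ₜ[ℂ] f) (b ⊗ₜ[ℂ] g) = (μ n a b) ⊗ₜ[ℂ] (f * g)) :
    ∀ (n : ℤ) (x y : V ⊗[ℂ] A),
      μhat n (LinearMap.lTensor V P x) (LinearMap.lTensor V P y)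
        = LinearMap.lTensor V P (μhat n (LinearMap.lTensor V P x) y)
          + LinearMap.lTensor V P (μhat n x (LinearMap.lTensor V P y))
          + lam • LinearMap.lTensor V P (μhat n x y) := by
  intro n x y
  induction x using TensorProduct.induction_on with
  | zero => simp
  | add x₁ x₂ h1 h2 =>
      simp only [map_add, LinearMap.add_apply, h1, h2, smul_add]
      abel
  | tmul a f =>
      induction y using TensorProduct.induction_on with
      | zero => simp
      | add y₁ y₂ h1 h2 =>
          simp only [map_add, h1, h2, smul_add]
          abel
      | tmul b g =>
          simp only [LinearMap.lTensor_tmul, hμhat, hP f g]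
          rw [TensorProduct.tmul_add, TensorProduct.tmul_add, TensorProduct.tmul_smul]
end

section
/- Let V be a vector space over ℂ equipped with two families of ℤ-indexed bilinear products a ≺ₙ b and a ≻ₙ b, each satisfying truncation, and define aₙb := a ≺ₙ b + a ≻ₙ b. (i) If (V,≺,≻) is a dendriform field algebra in component form — i.e. for all a,b,c ∈ V there exists N ∈ ℕ (depending only on a and c) such that the N-associativity identities hold at (a,b,c) for (α,β;γ,δ) equal to (≺,≺;≺,≺+≻), to (≻,≺;≻,≺), and to (≺+≻,≻;≻,≻) — then the products aₙb satisfy weak associativity. (ii) If moreover for all a,b ∈ V there exists N ∈ ℕ such that for all c ∈ V the N-commutativity identities hold at (a,b,c) for (α,β;γ,δ) equal to (≻,≺;≺,≻+≺) and to (≻,≻;≻,≻) (so (V,≺,≻) is a dendriform vertex Leibniz algebra in component form), then the products aₙb also satisfy weak commutativity; hence (V,Y) with Y(a,z)b = Σ_{n∈ℤ}(aₙb)z^{−n−1} is a vertex Leibniz algebra. -/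
section Aux

variable {V : Type*} [AddCommGroup V] [Module ℂ V]

omit [Module ℂ V] in
lemma fin_of_bdd (f : ℕ → V) (T : ℤ) (h : ∀ m : ℕ, T ≤ (m:ℤ) → f m = 0) :
    (Function.support f).Finite := by
  apply Set.Finite.subset (Set.finite_Iio T.toNat)
  intro m hm
  simp only [Set.mem_Iio]
  by_contra hc
  push_neg at hc
  exact hm (h m (by omega))

lemma pascal_nat (N : ℕ) (F : ℕ → V) :
    ∑ i ∈ Finset.range (N+2), ((-1:ℂ)^i * (((N+1).choose i):ℂ)) • F i
      = ∑ i ∈ Finset.range (N+1), ((-1:ℂ)^i * ((N.choose i):ℂ)) • F i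
        - ∑ i ∈ Finset.range (N+1), ((-1:ℂ)^i * ((N.choose i):ℂ)) • F (i+1) := by
  rw [Finset.sum_range_succ' (fun i => ((-1:ℂ)^i * (((N+1).choose i):ℂ)) • F i) (N+1),
      Finset.sum_range_succ' (fun i => ((-1:ℂ)^i * ((N.choose i):ℂ)) • F i) N]
  have h0 : ∑ i ∈ Finset.range N, ((-1:ℂ)^(i+1) * ((N.choose (i+1)):ℂ)) • F (i+1)
      = ∑ i ∈ Finset.range (N+1), ((-1:ℂ)^(i+1) * ((N.choose (i+1)):ℂ)) • F (i+1) := by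
    rw [Finset.sum_range_succ, Nat.choose_succ_self]
    simp
  simp only [h0]
  have h1 : ∀ i ∈ Finset.range (N+1),
      ((-1:ℂ)^(i+1) * (((N+1).choose (i+1)):ℂ)) • F (i+1)
        = ((-1:ℂ)^(i+1) * ((N.choose (i+1)):ℂ)) • F (i+1)
          - ((-1:ℂ)^i * ((N.choose i):ℂ)) • F (i+1) := by
    intro i _
    rw [← sub_smul]
    congr 1
    rw [Nat.choose_succ_succ]
    push_cast
    ring
  rw [Finset.sum_congr rfl h1, Finset.sum_sub_distrib]
  norm_num
  abel

/-- Pascal step for the commutator-type sums. -/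
lemma pascal_sum (N : ℕ) (G : ℤ → ℤ → V) (m n : ℤ) :
    ∑ i ∈ Finset.range (N+1+1), ((-1:ℂ)^i * (((N+1).choose i):ℂ)) • G (m + ((N+1:ℕ) : ℤ) - (i:ℤ)) (n + (i:ℤ))
      = ∑ i ∈ Finset.range (N+1), ((-1:ℂ)^i * ((N.choose i):ℂ)) • G ((m+1) + (N:ℤ) - (i:ℤ)) (n + (i:ℤ))
        - ∑ i ∈ Finset.range (N+1), ((-1:ℂ)^i * ((N.choose i):ℂ)) • G (m + (N:ℤ) - (i:ℤ)) ((n+1) + (i:ℤ)) := by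
  have key := pascal_nat N (fun i => G (m + (N:ℤ) + 1 - (i:ℤ)) (n + (i:ℤ)))
  refine Eq.trans (Finset.sum_congr rfl fun i _ => ?_) (key.trans ?_)
  · rw [show m + ((N+1:ℕ):ℤ) - (i:ℤ) = m + (N:ℤ) + 1 - (i:ℤ) from by push_cast; ring]
  · congr 1
    · exact Finset.sum_congr rfl fun i _ => by
        rw [show m + (N:ℤ) + 1 - (i:ℤ) = (m+1) + (N:ℤ) - (i:ℤ) from by ring]
    · exact Finset.sum_congr rfl fun i _ => by
        rw [show m + (N:ℤ) + 1 - ((i+1:ℕ):ℤ) = m + (N:ℤ) - (i:ℤ) from by push_cast; ring,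
            show n + ((i+1:ℕ):ℤ) = (n+1) + (i:ℤ) from by push_cast; ring]

lemma ncomm_bump {α β γ δ : ℤ → V → V → V} {N : ℕ} {a b c : V}
    (h : NCommId α β γ δ N a b c) : NCommId α β γ δ (N+1) a b c := by
  intro m n
  rw [pascal_sum N (fun x y => α x a (β y b c)) m n,
      pascal_sum N (fun y x => γ x b (δ y a c)) m n,
      h (m+1) n, h m (n+1)]

lemma ncomm_mono {α β γ δ : ℤ → V → V → V} {N M : ℕ} {a b c : V}
    (hNM : N ≤ M) (h : NCommId α β γ δ N a b c) : NCommId α β γ δ M a b c := by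
  induction M, hNM using Nat.le_induction with
  | base => exact h
  | succ M _ ih => exact ncomm_bump ih

lemma reflect_sum (N : ℕ) (G : ℤ → ℤ → V) (m n : ℤ) :
    ∑ i ∈ Finset.range (N+1), ((-1:ℂ)^i * ((N.choose i):ℂ)) • G (m + (N:ℤ) - (i:ℤ)) (n + (i:ℤ))
      = (-1:ℂ)^N • ∑ i ∈ Finset.range (N+1),
          ((-1:ℂ)^i * ((N.choose i):ℂ)) • G (m + (i:ℤ)) (n + (N:ℤ) - (i:ℤ)) := by
  rw [Finset.smul_sum, ← Finset.sum_range_reflect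
    (fun i => (-1:ℂ)^N • (((-1:ℂ)^i * ((N.choose i):ℂ)) • G (m + (i:ℤ)) (n + (N:ℤ) - (i:ℤ)))) (N+1)]
  refine Finset.sum_congr rfl fun j hj => ?_
  have hjN : j ≤ N := by simpa [Nat.lt_succ_iff] using hj
  simp only [Nat.add_sub_cancel]
  rw [smul_smul,
    show m + (((N-j:ℕ)):ℤ) = m + (N:ℤ) - (j:ℤ) from by push_cast [Nat.cast_sub hjN]; ring,
    show n + (N:ℤ) - (((N-j:ℕ)):ℤ) = n + (j:ℤ) from by push_cast [Nat.cast_sub hjN]; ring]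
  congr 1
  rw [Nat.choose_symm hjN, ← mul_assoc, ← pow_add,
    show N + (N - j) = 2*(N-j) + j from by omega, pow_add, pow_mul]
  norm_num

lemma ncomm_swap {α β γ δ : ℤ → V → V → V} {N : ℕ} {a b c : V}
    (h : NCommId α β γ δ N a b c) : NCommId γ δ α β N b a c := by
  intro m n
  rw [reflect_sum N (fun x y => γ x b (δ y a c)) m n,
      reflect_sum N (fun y x => α x a (β y b c)) m n,
      h n m]

end Aux

/-- (i) A dendriform field algebra in component form yields weak associativity of
the total products `aₙb = a ≺ₙ b + a ≻ₙ b`; (ii) a dendriform vertex Leibniz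
algebra in component form yields in addition weak commutativity (and truncation),
hence a vertex Leibniz algebra. -/
theorem stmt18 {V : Type*} [AddCommGroup V] [Module ℂ V]
    (prec succ : ℤ → V →ₗ[ℂ] V →ₗ[ℂ] V)
    (htr1 : Truncation (fun n (a b : V) => prec n a b))
    (htr2 : Truncation (fun n (a b : V) => succ n a b))
    (hass : ∀ a c : V, ∃ N : ℕ, ∀ b : V,
      NAssocId (fun n (a b : V) => prec n a b) (fun n (a b : V) => prec n a b)
        (fun n (a b : V) => prec n a b) (fun n (a b : V) => prec n a b + succ n a b) N a b c ∧
      NAssocId (fun n (a b : V) => succ n a b) (fun n (a b : V) => prec n a b)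
        (fun n (a b : V) => succ n a b) (fun n (a b : V) => prec n a b) N a b c ∧
      NAssocId (fun n (a b : V) => prec n a b + succ n a b) (fun n (a b : V) => succ n a b)
        (fun n (a b : V) => succ n a b) (fun n (a b : V) => succ n a b) N a b c) :
    WeakAssoc (fun n (a b : V) => prec n a b + succ n a b) ∧
    ((∀ a b : V, ∃ N : ℕ, ∀ c : V,
        NCommId (fun n (a b : V) => succ n a b) (fun n (a b : V) => prec n a b)
          (fun n (a b : V) => prec n a b) (fun n (a b : V) => prec n a b + succ n a b) N a b c ∧
        NCommId (fun n (a b : V) => succ n a b) (fun n (a b : V) => succ n a b)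
          (fun n (a b : V) => succ n a b) (fun n (a b : V) => succ n a b) N a b c) →
      WeakComm (fun n (a b : V) => prec n a b + succ n a b) ∧
      Truncation (fun n (a b : V) => prec n a b + succ n a b)) := by
  constructor
  · -- Weak associativity
    intro a c
    obtain ⟨N, hN⟩ := hass a c
    refine ⟨N, fun b => ?_⟩
    obtain ⟨h1, h2, h3⟩ := hN b
    intro p q
    have e1 := h1 p q
    have e2 := h2 p q
    have e3 := h3 p q
    beta_reduce
    beta_reduce at e1 e2 e3
    -- truncation bounds for the inner products
    obtain ⟨K1, hK1⟩ := htr1 b c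
    obtain ⟨K2, hK2⟩ := htr2 b c
    have hK1' : ∀ n ≥ K1, prec n b c = 0 := hK1
    have hK2' : ∀ n ≥ K2, succ n b c = 0 := hK2
    have hz1 : ∀ m : ℕ, max K1 K2 - q ≤ (m:ℤ) → prec (q + (m:ℤ)) b c = 0 :=
      fun m hm => hK1' _ (by omega)
    have hz2 : ∀ m : ℕ, max K1 K2 - q ≤ (m:ℤ) → succ (q + (m:ℤ)) b c = 0 :=
      fun m hm => hK2' _ (by omega)
    have hz : ∀ m : ℕ, max K1 K2 - q ≤ (m:ℤ) →
        prec (q + (m:ℤ)) b c + succ (q + (m:ℤ)) b c = 0 := by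
      intro m hm
      rw [hz1 m hm, hz2 m hm, add_zero]
    calc
      ∑ i ∈ Finset.range (N + 1), ((N.choose i : ℂ)) •
          (prec (q + (N:ℤ) - (i:ℤ)) (prec (p + (i:ℤ)) a b + succ (p + (i:ℤ)) a b) c
            + succ (q + (N:ℤ) - (i:ℤ)) (prec (p + (i:ℤ)) a b + succ (p + (i:ℤ)) a b) c)
        = (∑ i ∈ Finset.range (N + 1), ((N.choose i : ℂ)) •
              prec (q + (N:ℤ) - (i:ℤ)) (prec (p + (i:ℤ)) a b) c)
          + (∑ i ∈ Finset.range (N + 1), ((N.choose i : ℂ)) •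
              prec (q + (N:ℤ) - (i:ℤ)) (succ (p + (i:ℤ)) a b) c)
          + (∑ i ∈ Finset.range (N + 1), ((N.choose i : ℂ)) •
              succ (q + (N:ℤ) - (i:ℤ)) (prec (p + (i:ℤ)) a b + succ (p + (i:ℤ)) a b) c) := by
          rw [← Finset.sum_add_distrib, ← Finset.sum_add_distrib]
          refine Finset.sum_congr rfl fun i _ => ?_
          simp only [map_add, LinearMap.add_apply, smul_add]
          try abel
      _ = (∑ᶠ m : ℕ, genBinom ((m : ℂ) - (p : ℂ) - 1) m •
              prec ((N:ℤ) + p - (m:ℤ)) a (prec (q + (m:ℤ)) b c + succ (q + (m:ℤ)) b c))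
          + (∑ᶠ m : ℕ, genBinom ((m : ℂ) - (p : ℂ) - 1) m •
              succ ((N:ℤ) + p - (m:ℤ)) a (prec (q + (m:ℤ)) b c))
          + (∑ᶠ m : ℕ, genBinom ((m : ℂ) - (p : ℂ) - 1) m •
              succ ((N:ℤ) + p - (m:ℤ)) a (succ (q + (m:ℤ)) b c)) := by
          rw [e1, e2, e3]
      _ = ∑ᶠ m : ℕ, genBinom ((m : ℂ) - (p : ℂ) - 1) m •
            (prec ((N:ℤ) + p - (m:ℤ)) a (prec (q + (m:ℤ)) b c + succ (q + (m:ℤ)) b c)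
              + succ ((N:ℤ) + p - (m:ℤ)) a (prec (q + (m:ℤ)) b c + succ (q + (m:ℤ)) b c)) := by
          have f1 : (Function.support fun m : ℕ => genBinom ((m : ℂ) - (p : ℂ) - 1) m •
              prec ((N:ℤ) + p - (m:ℤ)) a (prec (q + (m:ℤ)) b c + succ (q + (m:ℤ)) b c)).Finite :=
            fin_of_bdd _ (max K1 K2 - q) fun m hm => by rw [hz m hm]; simp
          have f2 : (Function.support fun m : ℕ => genBinom ((m : ℂ) - (p : ℂ) - 1) m •
              succ ((N:ℤ) + p - (m:ℤ)) a (prec (q + (m:ℤ)) b c)).Finite :=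
            fin_of_bdd _ (max K1 K2 - q) fun m hm => by rw [hz1 m hm]; simp
          have f3 : (Function.support fun m : ℕ => genBinom ((m : ℂ) - (p : ℂ) - 1) m •
              succ ((N:ℤ) + p - (m:ℤ)) a (succ (q + (m:ℤ)) b c)).Finite :=
            fin_of_bdd _ (max K1 K2 - q) fun m hm => by rw [hz2 m hm]; simp
          have f23 : (Function.support fun m : ℕ =>
              genBinom ((m : ℂ) - (p : ℂ) - 1) m •
                succ ((N:ℤ) + p - (m:ℤ)) a (prec (q + (m:ℤ)) b c)
              + genBinom ((m : ℂ) - (p : ℂ) - 1) m •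
                succ ((N:ℤ) + p - (m:ℤ)) a (succ (q + (m:ℤ)) b c)).Finite :=
            fin_of_bdd _ (max K1 K2 - q) fun m hm => by
              rw [hz1 m hm, hz2 m hm]; simp
          rw [add_assoc, ← finsum_add_distrib f2 f3, ← finsum_add_distrib f1 f23]
          refine finsum_congr fun m => ?_
          simp only [map_add, smul_add]
          try abel
  · -- Weak commutativity and truncation
    intro hcomm
    constructor
    · intro a b
      obtain ⟨N1, hN1⟩ := hcomm a b
      obtain ⟨N2, hN2⟩ := hcomm b a
      refine ⟨max N1 N2, fun c => ?_⟩
      have T2 := ncomm_mono (le_max_left N1 N2) (hN1 c).1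
      have T3 := ncomm_mono (le_max_left N1 N2) (hN1 c).2
      have T1 := ncomm_swap (ncomm_mono (le_max_right N1 N2) (hN2 c).1)
      set N := max N1 N2 with hNdef
      intro m n
      have e1 := T1 m n
      have e2 := T2 m n
      have e3 := T3 m n
      beta_reduce
      beta_reduce at e1 e2 e3
      calc
        ∑ i ∈ Finset.range (N + 1), ((-1:ℂ)^i * (N.choose i : ℂ)) •
            (prec (m + (N:ℤ) - (i:ℤ)) a (prec (n + (i:ℤ)) b c + succ (n + (i:ℤ)) b c)
              + succ (m + (N:ℤ) - (i:ℤ)) a (prec (n + (i:ℤ)) b c + succ (n + (i:ℤ)) b c))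
          = (∑ i ∈ Finset.range (N + 1), ((-1:ℂ)^i * (N.choose i : ℂ)) •
                prec (m + (N:ℤ) - (i:ℤ)) a (prec (n + (i:ℤ)) b c + succ (n + (i:ℤ)) b c))
            + (∑ i ∈ Finset.range (N + 1), ((-1:ℂ)^i * (N.choose i : ℂ)) •
                succ (m + (N:ℤ) - (i:ℤ)) a (prec (n + (i:ℤ)) b c))
            + (∑ i ∈ Finset.range (N + 1), ((-1:ℂ)^i * (N.choose i : ℂ)) •
                succ (m + (N:ℤ) - (i:ℤ)) a (succ (n + (i:ℤ)) b c)) := by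
            rw [← Finset.sum_add_distrib, ← Finset.sum_add_distrib]
            refine Finset.sum_congr rfl fun i _ => ?_
            simp only [map_add, smul_add]
            try abel
        _ = (∑ i ∈ Finset.range (N + 1), ((-1:ℂ)^i * (N.choose i : ℂ)) •
                succ (n + (i:ℤ)) b (prec (m + (N:ℤ) - (i:ℤ)) a c))
            + (∑ i ∈ Finset.range (N + 1), ((-1:ℂ)^i * (N.choose i : ℂ)) •
                prec (n + (i:ℤ)) b (prec (m + (N:ℤ) - (i:ℤ)) a c + succ (m + (N:ℤ) - (i:ℤ)) a c))
            + (∑ i ∈ Finset.range (N + 1), ((-1:ℂ)^i * (N.choose i : ℂ)) •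
                succ (n + (i:ℤ)) b (succ (m + (N:ℤ) - (i:ℤ)) a c)) := by
            rw [e1, e2, e3]
        _ = ∑ i ∈ Finset.range (N + 1), ((-1:ℂ)^i * (N.choose i : ℂ)) •
              (prec (n + (i:ℤ)) b (prec (m + (N:ℤ) - (i:ℤ)) a c + succ (m + (N:ℤ) - (i:ℤ)) a c)
                + succ (n + (i:ℤ)) b (prec (m + (N:ℤ) - (i:ℤ)) a c + succ (m + (N:ℤ) - (i:ℤ)) a c)) := by
            rw [← Finset.sum_add_distrib, ← Finset.sum_add_distrib]
            refine Finset.sum_congr rfl fun i _ => ?_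
            simp only [map_add, smul_add]
            try abel
    · intro a b
      obtain ⟨K1, hK1⟩ := htr1 a b
      obtain ⟨K2, hK2⟩ := htr2 a b
      have hK1' : ∀ n ≥ K1, prec n a b = 0 := hK1
      have hK2' : ∀ n ≥ K2, succ n a b = 0 := hK2
      refine ⟨max K1 K2, fun n hn => ?_⟩
      beta_reduce
      rw [hK1' n (le_trans (le_max_left K1 K2) hn), hK2' n (le_trans (le_max_right K1 K2) hn),
        add_zero]
end
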